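/- Let δ > 0 and let K ⊆ ℝ^d be a convex body containing the origin. Then the image Φ_δ(K) is convex and Φ_δ(K) ⊆ K. -/

import Mathlib

/-!
Since `φ_δ(|x|) ∈ (0, 1]`, `Φ_δ(x)` lies on the segment from `0` to `x`, hence in `K`.
For convexity, the root equation gives `φ_δ(|x|) = 1 - δ|Φ_δ(x)|²`, and `Φ_δ` is inverted on
`{δ|y|² < 1}` by `y ↦ y / (1 - δ|y|²)`. For `y = t Φ_δ(x₁) + s Φ_δ(x₂)` with `t + s = 1`,
convexity of `|·|²` gives `t φ_δ(|x₁|) + s φ_δ(|x₂|) ≤ 1 - δ|y|² =: c`, so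
`y / c = (t φ_δ(|x₁|) / c) x₁ + (s φ_δ(|x₂|) / c) x₂` has nonnegative weights of sum at most `1`
and lies in `K`, which is convex and contains `0`.
-/

/-- For `δ > 0`, `φ_δ(r) = 2 / (1 + √(1 + 4δr²))`, the unique positive root of
`φ + δr²φ² = 1`. -/
noncomputable def phi (δ r : ℝ) : ℝ := 2 / (1 + Real.sqrt (1 + 4 * δ * r ^ 2))

/-- The map `Φ_δ : ℝ^d → ℝ^d`, `Φ_δ(x) = φ_δ(|x|) • x`. -/
noncomputable def Phi (δ : ℝ) {d : ℕ} (x : EuclideanSpace ℝ (Fin d)) :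
    EuclideanSpace ℝ (Fin d) := phi δ ‖x‖ • x

theorem Convex.smul_add_smul_mem_of_zero_mem {𝕜 E : Type*} [Field 𝕜] [LinearOrder 𝕜]
    [IsStrictOrderedRing 𝕜] [AddCommGroup E] [Module 𝕜 E] {s : Set E} (hs : Convex 𝕜 s)
    (h0 : (0 : E) ∈ s) {x y : E} (hx : x ∈ s) (hy : y ∈ s) {a b : 𝕜} (ha : 0 ≤ a) (hb : 0 ≤ b)
    (hab : a + b ≤ 1) : a • x + b • y ∈ s := by
  obtain ⟨z, hz, hzxy⟩ := hs.exists_mem_add_smul_eq hx hy ha hb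
  rw [← hzxy]
  exact hs.smul_mem_of_zero_mem h0 hz ⟨add_nonneg ha hb, hab⟩

section phi

variable {δ : ℝ}

theorem phi_pos (δ r : ℝ) : 0 < phi δ r := by
  unfold phi
  positivity

theorem one_le_sqrt_one_add_four_mul (hδ : 0 ≤ δ) (r : ℝ) : 1 ≤ Real.sqrt (1 + 4 * δ * r ^ 2) :=
  Real.one_le_sqrt.mpr (by nlinarith [sq_nonneg r])

theorem phi_le_one (hδ : 0 ≤ δ) (r : ℝ) : phi δ r ≤ 1 := by
  have := one_le_sqrt_one_add_four_mul hδ r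
  rw [phi, div_le_one (by linarith)]
  linarith

theorem phi_add_mul_sq_phi (hδ : 0 ≤ δ) (r : ℝ) : phi δ r + δ * r ^ 2 * phi δ r ^ 2 = 1 := by
  have hs := Real.sq_sqrt (by nlinarith [sq_nonneg r] : (0 : ℝ) ≤ 1 + 4 * δ * r ^ 2)
  have := one_le_sqrt_one_add_four_mul hδ r
  rw [phi]
  field_simp
  nlinarith

theorem phi_eq_of_add_mul_sq_eq_one (hδ : 0 ≤ δ) {r c : ℝ} (hc : 0 < c)
    (h : c + δ * r ^ 2 * c ^ 2 = 1) : phi δ r = c := by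
  have hfactor : (phi δ r - c) * (1 + δ * r ^ 2 * (phi δ r + c)) = 0 := by
    linear_combination phi_add_mul_sq_phi hδ r - h
  have hpos : 0 < 1 + δ * r ^ 2 * (phi δ r + c) := by
    have := phi_pos δ r
    positivity
  linarith [(mul_eq_zero.mp hfactor).resolve_right hpos.ne']

end phi

section Phi

variable {d : ℕ} {δ : ℝ}

theorem norm_Phi (δ : ℝ) (x : EuclideanSpace ℝ (Fin d)) : ‖Phi δ x‖ = phi δ ‖x‖ * ‖x‖ := by
  rw [Phi, norm_smul, Real.norm_of_nonneg (phi_pos δ ‖x‖).le]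

theorem phi_norm_eq_one_sub_mul_sq_norm_Phi (hδ : 0 ≤ δ) (x : EuclideanSpace ℝ (Fin d)) :
    phi δ ‖x‖ = 1 - δ * ‖Phi δ x‖ ^ 2 := by
  rw [norm_Phi]
  linear_combination phi_add_mul_sq_phi hδ ‖x‖

theorem Phi_inv_smul (hδ : 0 ≤ δ) {y : EuclideanSpace ℝ (Fin d)} (hy : 0 < 1 - δ * ‖y‖ ^ 2) :
    Phi δ ((1 - δ * ‖y‖ ^ 2)⁻¹ • y) = y := by
  set c := 1 - δ * ‖y‖ ^ 2
  have hphi : phi δ ‖c⁻¹ • y‖ = c := by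
    refine phi_eq_of_add_mul_sq_eq_one hδ hy ?_
    rw [norm_smul, Real.norm_of_nonneg (inv_nonneg.mpr hy.le)]
    field_simp
    ring
  rw [Phi, hphi, smul_smul, mul_inv_cancel₀ hy.ne', one_smul]

variable {K : Set (EuclideanSpace ℝ (Fin d))}

theorem image_Phi_subset (hδ : 0 ≤ δ) (hK : Convex ℝ K) (h0 : 0 ∈ K) : Phi δ '' K ⊆ K := by
  rintro _ ⟨x, hx, rfl⟩
  exact hK.smul_mem_of_zero_mem h0 hx ⟨(phi_pos δ ‖x‖).le, phi_le_one hδ ‖x‖⟩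

theorem convex_image_Phi (hδ : 0 ≤ δ) (hK : Convex ℝ K) (h0 : 0 ∈ K) :
    Convex ℝ (Phi δ '' K) := by
  rintro _ ⟨x₁, hx₁, rfl⟩ _ ⟨x₂, hx₂, rfl⟩ t s ht hs hts
  set y := t • Phi δ x₁ + s • Phi δ x₂
  set c := 1 - δ * ‖y‖ ^ 2
  have hφ₁ := phi_pos δ ‖x₁‖
  have hφ₂ := phi_pos δ ‖x₂‖
  have hp₁ := phi_norm_eq_one_sub_mul_sq_norm_Phi hδ x₁
  have hp₂ := phi_norm_eq_one_sub_mul_sq_norm_Phi hδ x₂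
  have hsq : ‖y‖ ^ 2 ≤ t * ‖Phi δ x₁‖ ^ 2 + s * ‖Phi δ x₂‖ ^ 2 :=
    (convexOn_univ_norm.pow (fun _ _ ↦ norm_nonneg _) 2).2 trivial trivial ht hs hts
  have hweights : t * phi δ ‖x₁‖ + s * phi δ ‖x₂‖ ≤ c := by
    rw [hp₁, hp₂]
    nlinarith [mul_le_mul_of_nonneg_left hsq hδ]
  have hweights_pos : 0 < t * phi δ ‖x₁‖ + s * phi δ ‖x₂‖ := by
    simpa only [smul_eq_mul, Set.mem_Ioi] using
      convex_Ioi (0 : ℝ) (Set.mem_Ioi.2 hφ₁) (Set.mem_Ioi.2 hφ₂) ht hs hts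
  have hc : 0 < c := hweights_pos.trans_le hweights
  have hy : y = (t * phi δ ‖x₁‖) • x₁ + (s * phi δ ‖x₂‖) • x₂ := by
    simp only [y, Phi, smul_smul]
  refine ⟨c⁻¹ • y, ?_, Phi_inv_smul hδ hc⟩
  rw [hy, smul_add, smul_smul, smul_smul]
  refine hK.smul_add_smul_mem_of_zero_mem h0 hx₁ hx₂ (by positivity) (by positivity) ?_
  rw [← mul_add, inv_mul_le_one₀ hc]
  exact hweights

end Phi

theorem stmt6_general (d : ℕ) (δ : ℝ) (hδ : 0 < δ) (K : Set (EuclideanSpace ℝ (Fin d)))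
    (hKconv : Convex ℝ K)
    (h0 : (0 : EuclideanSpace ℝ (Fin d)) ∈ K) :
    Convex ℝ (Phi δ '' K) ∧ Phi δ '' K ⊆ K :=
  ⟨convex_image_Phi hδ.le hKconv h0, image_Phi_subset hδ.le hKconv h0⟩

/-- Let `δ > 0` and let `K ⊆ ℝ^d` be a convex body containing the origin. Then the image
`Φ_δ(K)` is convex and `Φ_δ(K) ⊆ K`. -/
theorem stmt6 (d : ℕ) (δ : ℝ) (hδ : 0 < δ) (K : Set (EuclideanSpace ℝ (Fin d)))
    (hKcomp : IsCompact K) (hKconv : Convex ℝ K) (hKint : (interior K).Nonempty)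
    (h0 : (0 : EuclideanSpace ℝ (Fin d)) ∈ K) :
    Convex ℝ (Phi δ '' K) ∧ Phi δ '' K ⊆ K :=
  stmt6_general d δ hδ K hKconv h0
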